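/- Let q be a prime, n, m, k positive integers, and p ≥ 1, η ≥ 1 real numbers with (q : ℝ) > 2η. Let A be an n×m matrix over F_q and y ∈ F_qⁿ, and let Ā ∈ ℤ^{n×m}, ȳ ∈ ℤⁿ be their entrywise lifts with entries in {0,…,q−1}. Let a be a positive integer with (a : ℝ) > 2ηk + 1. Define A' ∈ ℤ^{(an+m+k)×(m+n)} as the block matrix whose first a·n rows consist of a vertically stacked copies of the matrix [Ā | q·Id_n], whose next m rows are [Id_m | 0_{m×n}], and whose last k rows are zero; define y' ∈ ℤ^{an+m+k} as a stacked copies of ȳ, followed by 0_m, followed by 1_k (the all-ones vector of length k). Then: (YES) if there exists x ∈ F_q^m with every entry equal to 0 or 1, with ‖x‖₀ ≤ k and A·x = y, then there exists x' ∈ ℤ^{m+n} with ‖A'·x' − y'‖_p^p ≤ 2k; and (NO) if A·x ≠ y for every x ∈ F_q^m with ‖x‖₀ ≤ 2ηk, then ‖A'·x' − w·y'‖_p^p > 2ηk for every x' ∈ ℤ^{m+n} and every nonzero integer w. -/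

import Mathlib

/-!
Write `x' = (x₁, x₂)`. The residual `A'x' − w y'` consists of `a` copies of the integer residual
`Ā x₁ + q x₂ − w ȳ`, then `x₁` itself, then `k` entries equal to `−w`.
A binary solution `x` of `A x = y` gives `x₁ = x̄`, with `x₂` absorbing the reduction mod `q`,
so only the last two blocks contribute, `‖x‖₀ + k ≤ 2k`.
Conversely, if the cost is at most `B = 2ηk`, then the repetition `a > B` forces the integer
residual to vanish, so `A x₁ = w y` over `F_q`; the last block forces `|w| < q`, so `w` is
invertible mod `q` and `w⁻¹ x₁` solves `A x = y` with `‖w⁻¹ x₁‖₀ ≤ ‖x₁‖_p^p ≤ B`.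
-/

open Finset Matrix

section SumAbsRpow

variable {ι κ : Type*} [Fintype ι] [Fintype κ] {p : ℝ}

/-- `‖v‖_p^p` for an integer vector `v`. -/
noncomputable def sumAbsRpow (p : ℝ) (v : ι → ℤ) : ℝ := ∑ i, |(v i : ℝ)| ^ p

lemma sumAbsRpow_nonneg (v : ι → ℤ) : 0 ≤ sumAbsRpow p v :=
  sum_nonneg fun _ _ => by positivity

lemma sumAbsRpow_sumElim (u : ι → ℤ) (v : κ → ℤ) :
    sumAbsRpow p (Sum.elim u v) = sumAbsRpow p u + sumAbsRpow p v :=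
  Fintype.sum_sum_type _

lemma sumAbsRpow_comp_snd (u : κ → ℤ) :
    sumAbsRpow p (fun x : ι × κ => u x.2) = Fintype.card ι * sumAbsRpow p u := by
  simp [sumAbsRpow, Fintype.sum_prod_type]

lemma sumAbsRpow_const (c : ℤ) :
    sumAbsRpow p (fun _ : ι => c) = Fintype.card ι * |(c : ℝ)| ^ p := by
  simp [sumAbsRpow]

lemma sumAbsRpow_zero (hp : p ≠ 0) : sumAbsRpow p (0 : ι → ℤ) = 0 := by
  simp [sumAbsRpow, Real.zero_rpow hp]

lemma one_le_abs_intCast_rpow {t : ℤ} (ht : t ≠ 0) (hp : 0 ≤ p) : 1 ≤ |(t : ℝ)| ^ p :=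
  Real.one_le_rpow (by exact_mod_cast Int.one_le_abs ht) hp

lemma hammingNorm_le_sumAbsRpow (hp : 0 ≤ p) (v : ι → ℤ) :
    (hammingNorm v : ℝ) ≤ sumAbsRpow p v :=
  calc (hammingNorm v : ℝ) = ∑ i with v i ≠ 0, (1 : ℝ) := by simp [hammingNorm]
    _ ≤ ∑ i with v i ≠ 0, |(v i : ℝ)| ^ p :=
      sum_le_sum fun i hi => one_le_abs_intCast_rpow (mem_filter.1 hi).2 hp
    _ ≤ sumAbsRpow p v :=
      sum_le_sum_of_subset_of_nonneg (filter_subset _ _) fun _ _ _ => by positivity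

lemma one_le_sumAbsRpow (hp : 0 ≤ p) {v : ι → ℤ} (hv : v ≠ 0) : 1 ≤ sumAbsRpow p v := by
  have : 1 ≤ hammingNorm v := hammingNorm_pos_iff.2 hv
  exact le_trans (by exact_mod_cast this) (hammingNorm_le_sumAbsRpow hp v)

lemma sumAbsRpow_eq_hammingNorm (hp : p ≠ 0) {v : ι → ℤ} (hv : ∀ i, v i = 0 ∨ v i = 1) :
    sumAbsRpow p v = hammingNorm v := by
  have (i : ι) : |(v i : ℝ)| ^ p = if v i ≠ 0 then 1 else 0 := by
    rcases hv i with h | h <;> simp [h, Real.zero_rpow hp]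
  rw [sumAbsRpow, Fintype.sum_congr _ _ this, sum_boole]
  rfl

end SumAbsRpow

lemma natCast_le_abs_intCast_rpow_of_dvd {q : ℕ} {w : ℤ} {p : ℝ} (hp : 1 ≤ p) (hw : w ≠ 0)
    (hqw : (q : ℤ) ∣ w) : (q : ℝ) ≤ |(w : ℝ)| ^ p := by
  have hq : (q : ℝ) ≤ |(w : ℝ)| := by
    rw [← Int.cast_abs]; exact_mod_cast Int.le_of_dvd (abs_pos.2 hw) ((dvd_abs _ _).2 hqw)
  exact hq.trans (Real.self_le_rpow_of_one_le (by exact_mod_cast Int.one_le_abs hw) hp)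

section Reduction

variable {q n m : ℕ} (A : Matrix (Fin n) (Fin m) (ZMod q)) (y : Fin n → ZMod q)

def liftResidual (x₁ : Fin m → ℤ) (x₂ : Fin n → ℤ) (w : ℤ) : Fin n → ℤ :=
  A.map (fun z => (z.val : ℤ)) *ᵥ x₁ + (q : ℤ) • x₂ - w • fun i => ((y i).val : ℤ)

lemma intCast_liftResidual [NeZero q] (x₁ : Fin m → ℤ) (x₂ : Fin n → ℤ) (w : ℤ) :
    (fun i => (liftResidual A y x₁ x₂ w i : ZMod q)) =
      A *ᵥ (fun j => (x₁ j : ZMod q)) - (w : ZMod q) • y := by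
  ext i
  simp [liftResidual, mulVec, dotProduct]

lemma mulVec_intCast_eq_of_liftResidual_eq_zero [NeZero q] {x₁ : Fin m → ℤ} {x₂ : Fin n → ℤ}
    {w : ℤ} (h : liftResidual A y x₁ x₂ w = 0) :
    A *ᵥ (fun j => (x₁ j : ZMod q)) = (w : ZMod q) • y := by
  rw [← sub_eq_zero, ← intCast_liftResidual, h]
  ext
  simp

lemma exists_liftResidual_eq_zero [NeZero q] {x₁ : Fin m → ℤ} {w : ℤ}
    (h : A *ᵥ (fun j => (x₁ j : ZMod q)) = (w : ZMod q) • y) :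
    ∃ x₂, liftResidual A y x₁ x₂ w = 0 := by
  have hdvd (i : Fin n) : (q : ℤ) ∣ liftResidual A y x₁ 0 w i := by
    rw [← ZMod.intCast_zmod_eq_zero_iff_dvd]
    simpa [h] using congrFun (intCast_liftResidual A y x₁ 0 w) i
  choose z hz using hdvd
  refine ⟨-z, funext fun i => ?_⟩
  have := hz i
  simp only [liftResidual, Pi.add_apply, Pi.sub_apply, Pi.smul_apply, Pi.neg_apply, smul_eq_mul,
    Pi.zero_apply, mul_zero, add_zero] at this ⊢
  linarith

variable (a k : ℕ)

def reductionMatrix : Matrix ((Fin a × Fin n) ⊕ (Fin m ⊕ Fin k)) (Fin m ⊕ Fin n) ℤ :=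
  Matrix.of fun i j =>
    match i, j with
    | Sum.inl (_, i), Sum.inl j => ((A i j).val : ℤ)
    | Sum.inl (_, i), Sum.inr j => if i = j then (q : ℤ) else 0
    | Sum.inr (Sum.inl i), Sum.inl j => if i = j then 1 else 0
    | Sum.inr (Sum.inl _), Sum.inr _ => 0
    | Sum.inr (Sum.inr _), _ => 0

def reductionTarget (m : ℕ) : (Fin a × Fin n) ⊕ (Fin m ⊕ Fin k) → ℤ := fun i =>
  match i with
  | Sum.inl (_, i) => ((y i).val : ℤ)
  | Sum.inr (Sum.inl _) => 0
  | Sum.inr (Sum.inr _) => 1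

lemma reductionMatrix_mulVec_sub_smul (x' : Fin m ⊕ Fin n → ℤ) (w : ℤ) :
    reductionMatrix A a k *ᵥ x' - w • reductionTarget y a k m =
      Sum.elim (fun ci => liftResidual A y (x' ∘ Sum.inl) (x' ∘ Sum.inr) w ci.2)
        (Sum.elim (x' ∘ Sum.inl) fun _ => -w) := by
  ext (⟨c, i⟩ | i | i) <;>
    simp [reductionMatrix, reductionTarget, liftResidual, mulVec, dotProduct,
      Fintype.sum_sum_type, ite_mul]

lemma sumAbsRpow_reduction (p : ℝ) (x' : Fin m ⊕ Fin n → ℤ) (w : ℤ) :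
    sumAbsRpow p (reductionMatrix A a k *ᵥ x' - w • reductionTarget y a k m) =
      a * sumAbsRpow p (liftResidual A y (x' ∘ Sum.inl) (x' ∘ Sum.inr) w) +
        sumAbsRpow p (x' ∘ Sum.inl) + k * |(w : ℝ)| ^ p := by
  rw [reductionMatrix_mulVec_sub_smul, sumAbsRpow_sumElim, sumAbsRpow_sumElim,
    sumAbsRpow_comp_snd, sumAbsRpow_const]
  simp only [Fintype.card_fin, Int.cast_neg, abs_neg]
  ring

lemma exists_sumAbsRpow_reduction_eq [NeZero q] {p : ℝ} (hp : p ≠ 0) {x : Fin m → ZMod q}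
    (hx : ∀ i, x i = 0 ∨ x i = 1) (hAx : A *ᵥ x = y) :
    ∃ x', sumAbsRpow p (reductionMatrix A a k *ᵥ x' - reductionTarget y a k m) =
      hammingNorm x + k := by
  set x₁ : Fin m → ℤ := fun j => ((x j).val : ℤ)
  have hx₁ : (fun j => (x₁ j : ZMod q)) = x := funext fun j => by simp [x₁]
  obtain ⟨x₂, hx₂⟩ := exists_liftResidual_eq_zero A y (x₁ := x₁) (w := 1) (by simpa [hx₁])
  have hx₁01 (j : Fin m) : x₁ j = 0 ∨ x₁ j = 1 := by
    have : (x j).val ≤ 1 := by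
      rcases hx j with h | h <;> simp [h, ZMod.val_one_eq_one_mod, Nat.mod_le]
    simp only [x₁]
    omega
  have hx₁norm : hammingNorm x₁ = hammingNorm x :=
    hammingNorm_comp (fun _ (z : ZMod q) => (z.val : ℤ))
      (fun _ => Nat.cast_injective.comp (ZMod.val_injective q)) fun _ => by simp
  refine ⟨Sum.elim x₁ x₂, ?_⟩
  rw [← one_smul ℤ (reductionTarget y a k m), sumAbsRpow_reduction]
  simp [Function.comp_def, hx₂, sumAbsRpow_zero hp, sumAbsRpow_eq_hammingNorm hp hx₁01, hx₁norm]

lemma exists_mulVec_eq_of_sumAbsRpow_reduction_le [Fact q.Prime] {p B : ℝ} (hp : 1 ≤ p)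
    (hBq : B < q * k) (hBa : B < a) {x' : Fin m ⊕ Fin n → ℤ} {w : ℤ} (hw : w ≠ 0)
    (hle : sumAbsRpow p (reductionMatrix A a k *ᵥ x' - w • reductionTarget y a k m) ≤ B) :
    ∃ x : Fin m → ZMod q, (hammingNorm x : ℝ) ≤ B ∧ A *ᵥ x = y := by
  rw [sumAbsRpow_reduction] at hle
  set r := liftResidual A y (x' ∘ Sum.inl) (x' ∘ Sum.inr) w
  set x₁ := x' ∘ Sum.inl
  have ha₀ : (0 : ℝ) ≤ a := a.cast_nonneg
  have hk₀ : (0 : ℝ) ≤ k := k.cast_nonneg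
  have hr₀ := mul_nonneg ha₀ (sumAbsRpow_nonneg (p := p) r)
  have hx₀ := sumAbsRpow_nonneg (p := p) x₁
  have hw₀ : 0 ≤ (k : ℝ) * |(w : ℝ)| ^ p := by positivity
  have hr : r = 0 := by
    by_contra hr
    have := mul_le_mul_of_nonneg_left (one_le_sumAbsRpow (p := p) (by linarith) hr) ha₀
    linarith
  have hqw : ¬ (q : ℤ) ∣ w := fun hqw => by
    have := mul_le_mul_of_nonneg_left (natCast_le_abs_intCast_rpow_of_dvd hp hw hqw) hk₀
    linarith
  have hw' : (w : ZMod q) ≠ 0 := by rwa [Ne, ZMod.intCast_zmod_eq_zero_iff_dvd]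
  refine ⟨(w : ZMod q)⁻¹ • fun j => (x₁ j : ZMod q), ?_, ?_⟩
  · calc (hammingNorm ((w : ZMod q)⁻¹ • fun j => (x₁ j : ZMod q)) : ℝ)
        ≤ hammingNorm x₁ := by
          exact_mod_cast
            (hammingNorm_smul_le_hammingNorm (α := ZMod q) (β := fun _ : Fin m => ZMod q)).trans
              (hammingNorm_comp_le_hammingNorm (fun _ (t : ℤ) => (t : ZMod q))
                fun _ => Int.cast_zero)
      _ ≤ sumAbsRpow p x₁ := hammingNorm_le_sumAbsRpow (by linarith) _
      _ ≤ B := by linarith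
  · rw [mulVec_smul, mulVec_intCast_eq_of_liftResidual_eq_zero A y hr, smul_smul,
      inv_mul_cancel₀ hw', one_smul]

end Reduction

theorem stmt17 (q : ℕ) (hq : q.Prime) (n m k : ℕ) (hk : 0 < k)
    (p η : ℝ) (hp : 1 ≤ p) (hqη : (q : ℝ) > 2 * η)
    (A : Matrix (Fin n) (Fin m) (ZMod q)) (y : Fin n → ZMod q)
    (a : ℕ) (hak : (a : ℝ) > 2 * η * k + 1)
    (A' : Matrix ((Fin a × Fin n) ⊕ (Fin m ⊕ Fin k)) (Fin m ⊕ Fin n) ℤ)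
    (hA' : A' = Matrix.of fun i j =>
      match i, j with
      | Sum.inl (_, i), Sum.inl j => ((A i j).val : ℤ)
      | Sum.inl (_, i), Sum.inr j => if i = j then (q : ℤ) else 0
      | Sum.inr (Sum.inl i), Sum.inl j => if i = j then 1 else 0
      | Sum.inr (Sum.inl _), Sum.inr _ => 0
      | Sum.inr (Sum.inr _), _ => 0)
    (y' : ((Fin a × Fin n) ⊕ (Fin m ⊕ Fin k)) → ℤ)
    (hy' : y' = fun i =>
      match i with
      | Sum.inl (_, i) => ((y i).val : ℤ)
      | Sum.inr (Sum.inl _) => 0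
      | Sum.inr (Sum.inr _) => 1) :
    ((∃ x : Fin m → ZMod q, (∀ i, x i = 0 ∨ x i = 1) ∧ hammingNorm x ≤ k ∧
        A.mulVec x = y) →
      ∃ x' : Fin m ⊕ Fin n → ℤ, ∑ i, |((A'.mulVec x' - y') i : ℝ)| ^ p ≤ 2 * k) ∧
    ((∀ x : Fin m → ZMod q, (hammingNorm x : ℝ) ≤ 2 * η * k → A.mulVec x ≠ y) →
      ∀ (x' : Fin m ⊕ Fin n → ℤ) (w : ℤ), w ≠ 0 →
        2 * η * k < ∑ i, |((A'.mulVec x' - w • y') i : ℝ)| ^ p) := by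
  have : Fact q.Prime := ⟨hq⟩
  obtain rfl : A' = reductionMatrix A a k := by subst hA'; ext (⟨_, _⟩ | _ | _) (_ | _) <;> rfl
  obtain rfl : y' = reductionTarget y a k m := by subst hy'; ext (⟨_, _⟩ | _ | _) <;> rfl
  refine ⟨fun ⟨x, hx, hxk, hAx⟩ => ?_, fun hno x' w hw => ?_⟩
  · obtain ⟨x', hx'⟩ := exists_sumAbsRpow_reduction_eq A y a k (by positivity) hx hAx
    refine ⟨x', ?_⟩
    change sumAbsRpow p _ ≤ _
    rw [hx']
    have : (hammingNorm x : ℝ) ≤ k := by exact_mod_cast hxk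
    linarith
  · by_contra! hle
    have hBq : 2 * η * k < q * k := by gcongr
    obtain ⟨x, hxB, hAx⟩ :=
      exists_mulVec_eq_of_sumAbsRpow_reduction_le A y a k hp hBq (by linarith) hw hle
    exact hno x hxB hAx
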